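/- arXiv:1401.2677 — 2 statements merged into one kernel-verified Lean document; each statement's English description precedes it below -/
import Mathlib

section
/- The reduced Burau representation ρ₃ : B₃ → GL(2, ℤ[q,q⁻¹]) is injective (faithful). -/
open LaurentPolynomial

noncomputable section

/-- The Laurent polynomial ring ℤ[q,q⁻¹]. -/
abbrev R : Type := LaurentPolynomial ℤ

/-- The variable q. -/
abbrev q : R := T 1

/-- Maximal degree of a Laurent polynomial, with M(0) = ⊥ (-∞). -/
def Mdeg (f : R) : WithBot ℤ := f.coeff.support.max

/-- Braid relations on m generators. -/
def braidRels (m : ℕ) : Set (FreeGroup (Fin m)) :=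
  {r | (∃ i j : Fin m, (i : ℕ) + 1 = (j : ℕ) ∧
          r = FreeGroup.of i * FreeGroup.of j * FreeGroup.of i *
              (FreeGroup.of j * FreeGroup.of i * FreeGroup.of j)⁻¹) ∨
       (∃ i j : Fin m, (i : ℕ) + 1 < (j : ℕ) ∧
          r = FreeGroup.of i * FreeGroup.of j * (FreeGroup.of j * FreeGroup.of i)⁻¹)}

/-- The braid group on n strands, with n-1 Artin generators. -/
abbrev BraidGroup (n : ℕ) := PresentedGroup (braidRels (n - 1))

/-- The Artin generator σ_{i+1} (0-based index i). -/
def σ {n : ℕ} (i : Fin (n - 1)) : BraidGroup n := PresentedGroup.of i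

/-- Artin generator with a natural-number index (1 outside range), 0-based. -/
def σ' {n : ℕ} (k : ℕ) : BraidGroup n := if h : k < n - 1 then σ ⟨k, h⟩ else 1

/-- The band (Birman–Ko–Lee) generator a_{i,j}, with 0-based punctures i < j < n:
  a_{i,j} = (σ_{j-2}⋯σ_{i+1}σᵢ)⁻¹ σ_{j-1} (σ_{j-2}⋯σ_{i+1}σᵢ) (1-based reading). -/
def band {n : ℕ} (i j : ℕ) : BraidGroup n :=
  (((List.range (j - 1 - i)).map (fun t => σ' (i + t))).reverse.prod)⁻¹ * σ' (j - 1) *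
    ((List.range (j - 1 - i)).map (fun t => σ' (i + t))).reverse.prod

/-- The classical Garside element Δ = (σ₁⋯σ_{n-1})(σ₁⋯σ_{n-2})⋯(σ₁σ₂)σ₁. -/
def halfTwist (n : ℕ) : BraidGroup n :=
  ((List.range (n - 1)).map (fun k => ((List.range (n - 1 - k)).map (σ' (n := n))).prod)).prod

/-- The dual Garside element δ = σ_{n-1}⋯σ₂σ₁. -/
def dualDelta (n : ℕ) : BraidGroup n :=
  (((List.range (n - 1)).map (σ' (n := n))).reverse).prod

/-- The reduced Burau matrices of the Artin generators σ₁, σ₂ of B₃. -/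
def burauGen3 : Fin 2 → Matrix (Fin 2) (Fin 2) R :=
  ![!![-q, 0; 1, 1], !![1, q; 0, -q]]

/-!
Let `x = σ₁σ₂σ₁` and `y = σ₁σ₂`. The braid relation gives `x² = y³ =: Δ²`, so `Δ²` commutes with
`x` and `y`, and every braid is `Δ^(2m)` times an alternating word in the syllables `x`, `y`, `y²`
(the free-product normal form of `B₃/⟨Δ²⟩ ≅ ℤ/2 ∗ ℤ/3`). Under Burau, `Δ² ↦ q³·1`, so it suffices
that no nonempty alternating word maps to a scalar matrix. All syllable matrices have entries in
`ℤ[q]`, and a ping-pong argument on the leading terms of `M (1, 1)` shows that the two coordinates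
of `M (1, 1)` always differ, while a scalar matrix would make them equal.
-/

lemma Matrix.map_ne_scalar {n A B : Type*} [Fintype n] [DecidableEq n] [Nonempty n]
    [CommSemiring A] [CommSemiring B] {φ : A →+* B} (hφ : Function.Injective φ)
    {M : Matrix n n A} (hM : ∀ a, M ≠ Matrix.scalar n a) (b : B) :
    M.map φ ≠ Matrix.scalar n b := by
  intro h
  obtain ⟨i⟩ := ‹Nonempty n›
  have hb : φ (M i i) = b := by simpa using congrFun (congrFun h i) i
  refine hM (M i i) (Matrix.map_injective hφ ?_)
  change M.map φ = (Matrix.scalar n (M i i)).map φ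
  rw [h, ← hb, Matrix.scalar_apply, Matrix.scalar_apply, Matrix.diagonal_map (map_zero φ)]

lemma LaurentPolynomial.not_isOfFinOrder_T {S : Type*} [Semiring S] [Nontrivial S] {n : ℤ}
    (hn : n ≠ 0) : ¬IsOfFinOrder (T n : S[T;T⁻¹]) := by
  rw [isOfFinOrder_iff_pow_eq_one]
  rintro ⟨k, hk, h⟩
  have h' := congrArg LaurentPolynomial.degree h
  rw [T_pow, ← T_zero, LaurentPolynomial.degree_T, LaurentPolynomial.degree_T] at h'
  have hkn : (k : ℤ) * n = 0 := by exact_mod_cast h'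
  exact hn ((mul_eq_zero.1 hkn).resolve_left (by omega))

inductive Syllable
  | x
  | y
  | yy

namespace Syllable

def isX : Syllable → Bool
  | x => true
  | _ => false

lemma eq_x_of_isX {l : Syllable} (h : l.isX = true) : l = .x := by
  cases l <;> simp_all [isX]

variable {M : Type*} [Monoid M] (a b : M) in
def eval : Syllable → M
  | x => a * b * a
  | y => a * b
  | yy => (a * b) ^ 2

end Syllable

def Alternating (w : List Syllable) : Prop :=
  w.IsChain fun l l' => l.isX ≠ l'.isX

section Monoid

variable {M N : Type*} [Monoid M] [Monoid N] (a b : M)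

def evalWord (w : List Syllable) : M :=
  (w.map (Syllable.eval a b)).prod

def fullTwist : M := (a * b * a) ^ 2

@[simp] lemma evalWord_nil : evalWord a b [] = 1 := rfl

@[simp] lemma evalWord_cons (l : Syllable) (w : List Syllable) :
    evalWord a b (l :: w) = l.eval a b * evalWord a b w := List.prod_cons

lemma map_evalWord {F : Type*} [FunLike F M N] [MonoidHomClass F M N] (f : F)
    (w : List Syllable) : f (evalWord a b w) = evalWord (f a) (f b) w := by
  induction w with
  | nil => simp
  | cons l w ih => cases l <;> simp [ih, Syllable.eval]

lemma map_fullTwist {F : Type*} [FunLike F M N] [MonoidHomClass F M N] (f : F) :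
    f (fullTwist a b) = fullTwist (f a) (f b) := by
  simp [fullTwist]

end Monoid

section Group

variable {G : Type*} [Group G] {a b : G}

lemma mul_pow_three_eq_fullTwist (hab : a * b * a = b * a * b) : (a * b) ^ 3 = fullTwist a b := by
  rw [fullTwist, sq]
  nth_rw 2 [hab]
  simp only [pow_succ, pow_zero, one_mul, mul_assoc]

lemma commute_fullTwist_eval (hab : a * b * a = b * a * b) (l : Syllable) :
    Commute (fullTwist a b) (l.eval a b) := by
  have hy : Commute (fullTwist a b) (a * b) := by
    rw [← mul_pow_three_eq_fullTwist hab]; exact Commute.self_pow _ _ |>.symm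
  cases l
  · exact (Commute.self_pow _ _).symm
  · exact hy
  · exact hy.pow_right 2

lemma exists_eval_mul_evalWord (hab : a * b * a = b * a * b) (l : Syllable) {w : List Syllable}
    (hw : Alternating w) : ∃ (j : ℤ) (w' : List Syllable), Alternating w' ∧
      l.eval a b * evalWord a b w = fullTwist a b ^ j * evalWord a b w' := by
  have hy3 := mul_pow_three_eq_fullTwist hab
  rcases w with _ | ⟨l', w⟩
  · exact ⟨0, [l], List.isChain_singleton l, by simp⟩
  by_cases hl : l.isX = l'.isX
  · have hw' : Alternating w := hw.tail
    have hrep : ∀ l'', l''.isX = l'.isX → Alternating (l'' :: w) := fun l'' h => by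
      rcases w with _ | ⟨k, w⟩
      · exact List.isChain_singleton _
      · exact List.isChain_cons_cons.2 ⟨h ▸ (List.isChain_cons_cons.1 hw).1, hw.tail⟩
    -- x·x = Δ², y·y = y², y·y² = y²·y = Δ², y²·y² = Δ²·y
    rcases l with _ | _ | _ <;> rcases l' with _ | _ | _ <;> simp [Syllable.isX] at hl
    · exact ⟨1, w, hw', by simp [Syllable.eval, fullTwist, ← mul_assoc, sq]⟩
    · exact ⟨0, .yy :: w, hrep _ rfl, by simp [Syllable.eval, ← mul_assoc, sq]⟩
    · exact ⟨1, w, hw', by simp [Syllable.eval, ← mul_assoc, ← hy3, pow_succ]⟩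
    · exact ⟨1, w, hw', by simp [Syllable.eval, ← mul_assoc, ← hy3, pow_succ]⟩
    · exact ⟨1, .y :: w, hrep _ rfl, by simp [Syllable.eval, ← mul_assoc, ← hy3, pow_succ]⟩
  · exact ⟨0, l :: l' :: w, List.isChain_cons_cons.2 ⟨hl, hw⟩, by simp⟩

variable (a b) in
def HasNormalForm (g : G) : Prop :=
  ∃ (m : ℤ) (w : List Syllable), Alternating w ∧ g = fullTwist a b ^ m * evalWord a b w

lemma HasNormalForm.eval_mul (hab : a * b * a = b * a * b) (l : Syllable) {g : G}
    (hg : HasNormalForm a b g) : HasNormalForm a b (l.eval a b * g) := by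
  obtain ⟨m, w, hw, rfl⟩ := hg
  obtain ⟨j, w', hw', h⟩ := exists_eval_mul_evalWord hab l hw
  refine ⟨m + j, w', hw', ?_⟩
  rw [← ((commute_fullTwist_eval hab l).zpow_left m).left_comm, h, zpow_add, mul_assoc]

lemma HasNormalForm.fullTwist_zpow_mul (k : ℤ) {g : G} (hg : HasNormalForm a b g) :
    HasNormalForm a b (fullTwist a b ^ k * g) := by
  obtain ⟨m, w, hw, rfl⟩ := hg
  exact ⟨k + m, w, hw, by rw [zpow_add, mul_assoc]⟩

lemma HasNormalForm.mul_of_fullTwist_mul_eq (hab : a * b * a = b * a * b) {s g : G}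
    {l₁ l₂ : Syllable} (hs : fullTwist a b * s = l₁.eval a b * l₂.eval a b) (hg : HasNormalForm a b g) :
    HasNormalForm a b (s * g) := by
  have h : s * g = fullTwist a b ^ (-1 : ℤ) * (l₁.eval a b * (l₂.eval a b * g)) := by
    rw [← mul_assoc (l₁.eval a b), ← hs, zpow_neg_one, mul_assoc, inv_mul_cancel_left]
  rw [h]
  exact ((hg.eval_mul hab l₂).eval_mul hab l₁).fullTwist_zpow_mul _

lemma HasNormalForm.of_mem_closure (hab : a * b * a = b * a * b) {g : G}
    (hg : g ∈ Subgroup.closure {a, b}) : HasNormalForm a b g := by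
  induction hg using Subgroup.closure_induction_left with
  | one => exact ⟨0, [], List.isChain_nil, by simp⟩
  | mul_left s hs g _ ih =>
    rcases hs with rfl | rfl
    · refine ih.mul_of_fullTwist_mul_eq hab (l₁ := .yy) (l₂ := .x) ?_
      rw [← mul_pow_three_eq_fullTwist hab]
      simp only [Syllable.eval, pow_succ, pow_zero, one_mul, mul_assoc]
    · refine ih.mul_of_fullTwist_mul_eq hab (l₁ := .x) (l₂ := .yy) ?_
      rw [fullTwist, sq]
      simp only [Syllable.eval, pow_succ, pow_zero, one_mul, mul_assoc]
  | inv_mul_cancel s hs g _ ih =>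
    rcases hs with rfl | rfl
    · refine ih.mul_of_fullTwist_mul_eq hab (l₁ := .x) (l₂ := .y) ?_
      simp [Syllable.eval, fullTwist, sq, mul_assoc]
    · refine ih.mul_of_fullTwist_mul_eq hab (l₁ := .y) (l₂ := .x) ?_
      rw [fullTwist, sq]
      nth_rw 2 [hab]
      simp [Syllable.eval, mul_assoc]

end Group

open Polynomial

section PingPong

variable {f g : ℤ[X]}

-- For `g ≠ 0`: `f / g ∼ c q^d` as `q → ∞` with `d ≥ 2`, or with `d = 1` and `c ≠ 1`.
def Dominates (f g : ℤ[X]) : Prop :=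
  g ≠ 0 ∧ g.natDegree < f.natDegree ∧
    (f.natDegree = g.natDegree + 1 → f.leadingCoeff ≠ g.leadingCoeff)

lemma Dominates.ne (h : Dominates f g) : f ≠ g := by
  rintro rfl
  exact lt_irrefl _ h.2.1

lemma Dominates.ne_X_mul (h : Dominates f g) : f ≠ X * g := by
  rintro rfl
  exact h.2.2 (natDegree_X_mul h.1) (by simp)

lemma not_dominates_one_one : ¬Dominates 1 1 := fun h => lt_irrefl _ h.2.1

lemma leadingTerm_add_X_mul_of_not_dominates (hg : g ≠ 0) (h : ¬Dominates f g) :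
    (f + X * g).natDegree = g.natDegree + 1 ∧ (f + X * g).leadingCoeff ≠ -g.leadingCoeff := by
  have hXg : (X * g).natDegree = g.natDegree + 1 := natDegree_X_mul hg
  have hlc : (X * g).leadingCoeff = g.leadingCoeff := by simp
  have hlc0 : g.leadingCoeff ≠ 0 := leadingCoeff_ne_zero.2 hg
  by_cases hlt : f.natDegree < (X * g).natDegree
  · rw [natDegree_add_eq_right_of_natDegree_lt hlt, leadingCoeff_add_of_degree_lt
      (degree_lt_degree hlt), hlc, hXg]
    exact ⟨rfl, fun h => hlc0 (by omega)⟩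
  · have ⟨hdeg, hlcf⟩ : f.natDegree = g.natDegree + 1 ∧ f.leadingCoeff = g.leadingCoeff := by
      by_contra hne
      exact h ⟨hg, by omega, fun hd hl => hne ⟨hd, hl⟩⟩
    have hf : f ≠ 0 := by rintro rfl; simp at hdeg
    have hsum : f.leadingCoeff + (X * g).leadingCoeff ≠ 0 := by rw [hlc, hlcf]; omega
    have hdeg' : f.degree = (X * g).degree := by
      rw [degree_eq_natDegree hf, degree_eq_natDegree (mul_ne_zero X_ne_zero hg), hdeg, hXg]
    have hdeg_sum : (f + X * g).degree = (X * g).degree := by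
      rw [degree_add_eq_of_leadingCoeff_add_ne_zero hsum, hdeg', max_self]
    refine ⟨?_, ?_⟩
    · rw [natDegree_eq_of_degree_eq hdeg_sum, hXg]
    · rw [leadingCoeff_add_of_degree_eq hdeg' hsum, hlc, hlcf]
      omega

lemma dominates_y (hf : f ≠ 0) (hg : g ≠ 0) (h : ¬Dominates f g) :
    Dominates (-(X * (f + X * g))) f := by
  obtain ⟨hdeg, hlc⟩ := leadingTerm_add_X_mul_of_not_dominates hg h
  have hh : f + X * g ≠ 0 := by rintro h0; simp [h0] at hdeg
  rw [Dominates, natDegree_neg, leadingCoeff_neg, natDegree_X_mul hh, hdeg]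
  refine ⟨hf, ?_, fun hd => ?_⟩
  · by_contra hlt
    exact h ⟨hg, by omega, fun _ => by omega⟩
  · have hlcf : f.leadingCoeff = g.leadingCoeff := by
      by_contra hne
      exact h ⟨hg, by omega, fun _ => hne⟩
    simp only [leadingCoeff_mul, leadingCoeff_X, one_mul, hlcf]
    omega

lemma dominates_yy (hg : g ≠ 0) (h : ¬Dominates f g) :
    Dominates (X ^ 3 * g) (-(X * (f + X * g))) := by
  obtain ⟨hdeg, hlc⟩ := leadingTerm_add_X_mul_of_not_dominates hg h
  have hh : f + X * g ≠ 0 := by rintro h0; simp [h0] at hdeg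
  rw [Dominates, natDegree_neg, leadingCoeff_neg, natDegree_X_mul hh, natDegree_X_pow_mul 3 hg,
    hdeg]
  refine ⟨neg_ne_zero.2 (mul_ne_zero X_ne_zero hh), by omega, fun _ => ?_⟩
  simp only [leadingCoeff_mul, leadingCoeff_X, leadingCoeff_X_pow, one_mul]
  omega

lemma not_dominates_x (h : Dominates f g) : ¬Dominates (-(X ^ 2 * g)) (-(X * f)) := by
  have hf : f ≠ 0 := by rintro rfl; simpa using h.2.1
  intro h'
  have := h'.2.1
  rw [natDegree_neg, natDegree_neg, natDegree_X_mul hf, natDegree_X_pow_mul 2 h.1] at this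
  have := h.2.1
  omega

end PingPong

open Matrix

def burauGen3Poly : Fin 2 → Matrix (Fin 2) (Fin 2) ℤ[X] :=
  ![!![-X, 0; 1, 1], !![1, X; 0, -X]]

local notation "S₀" => burauGen3Poly 0
local notation "S₁" => burauGen3Poly 1

lemma map_burauGen3Poly (i : Fin 2) : (burauGen3Poly i).map toLaurent = burauGen3 i := by
  refine Matrix.ext fun j k => ?_
  fin_cases i <;> fin_cases j <;> fin_cases k <;> simp [burauGen3Poly, burauGen3]

lemma eval_burauGen3Poly_x : Syllable.x.eval S₀ S₁ = !![0, -X ^ 2; -X, 0] := by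
  simp only [Syllable.eval, burauGen3Poly, cons_val_zero, cons_val_one, mul_fin_two]
  congr 1; ring_nf

lemma eval_burauGen3Poly_y : Syllable.y.eval S₀ S₁ = !![-X, -X ^ 2; 1, 0] := by
  simp only [Syllable.eval, burauGen3Poly, cons_val_zero, cons_val_one, mul_fin_two]
  congr 1; ring_nf

lemma eval_burauGen3Poly_yy : Syllable.yy.eval S₀ S₁ = !![0, X ^ 3; -X, -X ^ 2] := by
  simp only [Syllable.eval, burauGen3Poly, cons_val_zero, cons_val_one, mul_fin_two, sq]
  congr 1; ring_nf

lemma fullTwist_burauGen3Poly : fullTwist S₀ S₁ = Matrix.scalar (Fin 2) (X ^ 3 : ℤ[X]) := by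
  rw [fullTwist, show S₀ * S₁ * S₀ = Syllable.x.eval S₀ S₁ from rfl, eval_burauGen3Poly_x, sq,
    mul_fin_two]
  refine Matrix.ext fun j k => ?_
  fin_cases j <;> fin_cases k <;> simp <;> ring

lemma eval_burauGen3Poly_x_mulVec (u : Fin 2 → ℤ[X]) :
    Syllable.x.eval S₀ S₁ *ᵥ u = ![-(X ^ 2 * u 1), -(X * u 0)] := by
  rw [eval_burauGen3Poly_x, mulVec_fin_two]
  simp only [of_apply, cons_val', cons_val_zero, cons_val_one, empty_val', cons_val_fin_one]
  ring_nf

lemma eval_burauGen3Poly_y_mulVec (u : Fin 2 → ℤ[X]) :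
    Syllable.y.eval S₀ S₁ *ᵥ u = ![-(X * (u 0 + X * u 1)), u 0] := by
  rw [eval_burauGen3Poly_y, mulVec_fin_two]
  simp only [of_apply, cons_val', cons_val_zero, cons_val_one, empty_val', cons_val_fin_one]
  ring_nf

lemma eval_burauGen3Poly_yy_mulVec (u : Fin 2 → ℤ[X]) :
    Syllable.yy.eval S₀ S₁ *ᵥ u = ![X ^ 3 * u 1, -(X * (u 0 + X * u 1))] := by
  rw [eval_burauGen3Poly_yy, mulVec_fin_two]
  simp only [of_apply, cons_val', cons_val_zero, cons_val_one, empty_val', cons_val_fin_one]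
  ring_nf

-- Where `M (1, 1)` lies when the alternating word `M` begins with the syllable `l`. Both regions
-- avoid the diagonal `v 0 = v 1`, on which scalar matrices keep `(1, 1)`.
def PingPong : Syllable → (Fin 2 → ℤ[X]) → Prop
  | .x, v => v 0 ≠ 0 ∧ v 1 ≠ 0 ∧ ¬Dominates (v 0) (v 1) ∧ v 0 ≠ v 1
  | _, v => Dominates (v 0) (v 1)

lemma PingPong.ne {l : Syllable} {v : Fin 2 → ℤ[X]} (h : PingPong l v) : v 0 ≠ v 1 := by
  cases l
  exacts [h.2.2.2, Dominates.ne h, Dominates.ne h]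

lemma PingPong.dominates {l : Syllable} {v : Fin 2 → ℤ[X]} (hl : l.isX = false)
    (h : PingPong l v) : Dominates (v 0) (v 1) := by
  cases l
  exacts [absurd hl (by simp [Syllable.isX]), h, h]

lemma pingPong_x_mulVec {u : Fin 2 → ℤ[X]} (hu : Dominates (u 0) (u 1) ∨ u = ![1, 1]) :
    PingPong .x (Syllable.x.eval S₀ S₁ *ᵥ u) := by
  rw [eval_burauGen3Poly_x_mulVec]
  simp only [PingPong, cons_val_zero, cons_val_one]
  rcases hu with hu | rfl
  · have h0 : u 0 ≠ 0 := by rintro h; simpa [h] using hu.2.1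
    refine ⟨by simpa using hu.1, by simpa using h0, not_dominates_x hu, fun h => hu.ne_X_mul ?_⟩
    rw [neg_inj, sq, mul_assoc] at h
    exact (mul_left_cancel₀ X_ne_zero h).symm
  · refine ⟨by simp, by simp, by simp [Dominates], fun h => ?_⟩
    simpa using congrArg natDegree h

lemma pingPong_y_mulVec {l : Syllable} (hl : l.isX = false) {u : Fin 2 → ℤ[X]}
    (h0 : u 0 ≠ 0) (h1 : u 1 ≠ 0) (hu : ¬Dominates (u 0) (u 1)) :
    PingPong l (l.eval S₀ S₁ *ᵥ u) := by
  cases l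
  · simp [Syllable.isX] at hl
  · rw [eval_burauGen3Poly_y_mulVec]
    exact dominates_y h0 h1 hu
  · rw [eval_burauGen3Poly_yy_mulVec]
    exact dominates_yy h1 hu

lemma pingPong_evalWord_mulVec {l : Syllable} {w : List Syllable} (hw : Alternating (l :: w)) :
    PingPong l (evalWord S₀ S₁ (l :: w) *ᵥ ![1, 1]) := by
  induction w generalizing l with
  | nil =>
    rw [evalWord_cons, evalWord_nil, mul_one]
    cases hl : l.isX
    · exact pingPong_y_mulVec hl one_ne_zero one_ne_zero not_dominates_one_one
    · obtain rfl := Syllable.eq_x_of_isX hl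
      exact pingPong_x_mulVec (Or.inr rfl)
  | cons a w ih =>
    have hla : l.isX ≠ a.isX := (List.isChain_cons_cons.1 hw).1
    have hu := ih hw.tail
    rw [evalWord_cons, ← mulVec_mulVec]
    cases hl : l.isX
    · obtain rfl := Syllable.eq_x_of_isX (l := a) (by simpa [hl] using hla.symm)
      obtain ⟨h0, h1, hnd, -⟩ := hu
      exact pingPong_y_mulVec hl h0 h1 hnd
    · obtain rfl := Syllable.eq_x_of_isX hl
      exact pingPong_x_mulVec (Or.inl (hu.dominates (by simpa [hl] using hla.symm)))

lemma evalWord_burauGen3Poly_ne_scalar {w : List Syllable} (hw : Alternating w) (hne : w ≠ [])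
    (s : ℤ[X]) : evalWord S₀ S₁ w ≠ Matrix.scalar (Fin 2) s := by
  obtain ⟨l, w, rfl⟩ := List.exists_cons_of_ne_nil hne
  intro h
  apply (pingPong_evalWord_mulVec hw).ne
  simp [h]

lemma σ_braid_rel : (σ 0 : BraidGroup 3) * σ 1 * σ 0 = σ 1 * σ 0 * σ 1 := by
  have h := PresentedGroup.one_of_mem (rels := braidRels 2) (Or.inl ⟨0, 1, rfl, rfl⟩)
  simp only [map_mul, map_inv] at h
  exact mul_inv_eq_one.1 h

lemma mem_closure_σ (g : BraidGroup 3) : g ∈ Subgroup.closure {σ 0, σ 1} := by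
  refine Subgroup.closure_mono ?_ (PresentedGroup.closure_range_of (braidRels 2) ▸
    Subgroup.mem_top g)
  rintro _ ⟨i, rfl⟩
  fin_cases i
  exacts [Or.inl rfl, Or.inr rfl]

section Burau

variable (ρ : BraidGroup 3 →* GL (Fin 2) R)

lemma coe_burau_evalWord
    (hρ : ∀ i : Fin 2, (ρ (σ i) : Matrix (Fin 2) (Fin 2) R) = burauGen3 i) (w : List Syllable) :
    (ρ (evalWord (σ 0) (σ 1) w) : Matrix (Fin 2) (Fin 2) R) =
      (evalWord S₀ S₁ w).map toLaurent := by
  have h := map_evalWord (σ 0) (σ 1) ((Units.coeHom _).comp ρ) w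
  have h' := map_evalWord S₀ S₁ (toLaurent (R := ℤ)).mapMatrix w
  simp only [MonoidHom.coe_comp, Function.comp_apply, Units.coeHom_apply, hρ] at h
  rw [h, ← map_burauGen3Poly, ← map_burauGen3Poly]
  exact h'.symm

lemma burau_fullTwist
    (hρ : ∀ i : Fin 2, (ρ (σ i) : Matrix (Fin 2) (Fin 2) R) = burauGen3 i) :
    ρ (fullTwist (σ 0) (σ 1)) = Matrix.GeneralLinearGroup.scalar (Fin 2) (isUnit_T 3).unit := by
  ext1
  have h := map_fullTwist (σ 0) (σ 1) ((Units.coeHom _).comp ρ)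
  simp only [MonoidHom.coe_comp, Function.comp_apply, Units.coeHom_apply, hρ] at h
  have h' := map_fullTwist S₀ S₁ (toLaurent (R := ℤ)).mapMatrix
  simp only [RingHom.mapMatrix_apply, fullTwist_burauGen3Poly] at h'
  rw [h, ← map_burauGen3Poly, ← map_burauGen3Poly, ← h', Matrix.GeneralLinearGroup.coe_scalar,
    Matrix.scalar_apply, Matrix.scalar_apply, Matrix.diagonal_map (map_zero _)]
  simp

end Burau

/-- The reduced Burau representation of the 3-strand braid group is faithful. -/
theorem burau3_faithful
    (ρ : BraidGroup 3 →* GL (Fin 2) R)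
    (hρ : ∀ i : Fin 2, (ρ (σ i) : Matrix (Fin 2) (Fin 2) R) = burauGen3 i) :
    Function.Injective ρ := by
  rw [injective_iff_map_eq_one]
  intro g hg
  obtain ⟨m, w, hw, rfl⟩ := HasNormalForm.of_mem_closure σ_braid_rel (mem_closure_σ g)
  set u := (isUnit_T (R := ℤ) 3).unit
  rw [map_mul, map_zpow, burau_fullTwist ρ hρ, ← map_zpow] at hg
  have hmat := congrArg Units.val (eq_inv_of_mul_eq_one_right hg)
  rw [← map_inv, coe_burau_evalWord ρ hρ, Matrix.GeneralLinearGroup.coe_scalar] at hmat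
  obtain rfl : w = [] := by
    by_contra hne
    exact Matrix.map_ne_scalar toLaurent_injective (evalWord_burauGen3Poly_ne_scalar hw hne) _ hmat
  have hu : u ^ m = 1 := by
    rwa [evalWord_nil, Matrix.map_one _ (map_zero _) (map_one _),
      ← map_one (Matrix.scalar (Fin 2)), Matrix.scalar_inj, eq_comm, Units.val_eq_one,
      inv_eq_one] at hmat
  have hm : m = 0 := injective_zpow_iff_not_isOfFinOrder.2
    (by rw [← Units.isOfFinOrder_val]; exact not_isOfFinOrder_T three_ne_zero)
    (hu.trans (zpow_zero u).symm)
  simp [hm]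
end
end

section
/- Let x ∈ Bₙ and let ρₙ be the reduced Burau representation. Then M(ρₙ(x)) ≤ sup_d(x), i.e., the maximal q-degree occurring among the entries of the Burau matrix of x is at most the dual (Birman–Ko–Lee) supremum of x. -/
open LaurentPolynomial

noncomputable section

/-- The reduced Burau matrix of the Artin generator σ_{i+1} (0-based i) of Bₙ. -/
def burauGen (n : ℕ) (i : Fin (n - 1)) : Matrix (Fin (n - 1)) (Fin (n - 1)) R :=
  fun j k =>
    if j = k then (if (j : ℕ) = (i : ℕ) then -q else 1)
    else if (k : ℕ) = (i : ℕ) ∧ (j : ℕ) + 1 = (i : ℕ) then q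
    else if (k : ℕ) = (i : ℕ) ∧ (j : ℕ) = (i : ℕ) + 1 then 1
    else 0

/-- Maximal q-degree among the entries of a matrix. -/
def Mmat {m : ℕ} (A : Matrix (Fin m) (Fin m) R) : WithBot ℤ :=
  Finset.univ.sup fun p : Fin m × Fin m => Mdeg (A p.1 p.2)

/-- Maximal q-degree among the entries of the i-th row of a matrix. -/
def Mrow {m : ℕ} (A : Matrix (Fin m) (Fin m) R) (i : Fin m) : WithBot ℤ :=
  Finset.univ.sup fun j : Fin m => Mdeg (A i j)

/-- x is a dual-positive braid: a product of band generators. -/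
def DualPositive {n : ℕ} (x : BraidGroup n) : Prop :=
  x ∈ Submonoid.closure {y : BraidGroup n | ∃ i j : ℕ, i < j ∧ j < n ∧ y = band i j}

/-- Dual left divisibility: x ≼_d y iff x⁻¹y is dual-positive. -/
def DualDvd {n : ℕ} (x y : BraidGroup n) : Prop := DualPositive (x⁻¹ * y)

/-- d is a dual simple element: a dual-positive left divisor of δ. -/
def DualSimple {n : ℕ} (d : BraidGroup n) : Prop :=
  DualPositive d ∧ DualDvd d (dualDelta n)

/-- (d, d') is left-weighted for the dual structure: δ ∧_d (dd') = d, i.e. every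
  common dual-prefix of δ and of dd' is a dual-prefix of d. -/
def DualLeftWeighted {n : ℕ} (d d' : BraidGroup n) : Prop :=
  ∀ t : BraidGroup n, DualDvd t (dualDelta n) → DualDvd t (d * d') → DualDvd t d

/-!
The Burau matrix of a band generator `a_{i,j}` is a rank-one perturbation `1 + u wᵀ` of the
identity, where `u` has entries of degree `≤ 1`, `w` is a `0/1` vector and `w ⬝ u = -1 - q`.
Hence its inverse is `1 + q⁻¹ u wᵀ`, all of whose entries have degree `≤ 0`, and so
`M(ρ(y)⁻¹) ≤ 0` for every dual-positive `y`. The matrix of `δ` is `q` times an integer matrix,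
which forces `ρ(δ)⁻¹` to be `q⁻¹` times an integer matrix, so `M(ρ(δ)ᵖ) ≤ p` for every `p ∈ ℤ`.
A dual simple `d` equals `δ (d⁻¹δ)⁻¹` with `d⁻¹δ` dual-positive, so `M(ρ(d)) ≤ 1`, and the
theorem follows from `M(AB) ≤ M(A) + M(B)`.
-/

open Matrix

namespace LaurentPolynomial

variable {S : Type*}

theorem degree_add_le [Semiring S] (f g : S[T;T⁻¹]) :
    (f + g).degree ≤ max f.degree g.degree := by
  refine Finset.max_le fun d hd => ?_
  rcases Finset.mem_union.mp (Finsupp.support_add hd) with h | h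
  · exact (Finset.le_max h).trans (le_max_left _ _)
  · exact (Finset.le_max h).trans (le_max_right _ _)

theorem degree_neg [Ring S] (f : S[T;T⁻¹]) : (-f).degree = f.degree := by
  rw [degree, degree, AddMonoidAlgebra.coeff_neg, Finsupp.support_neg]

theorem degree_sub_le [Ring S] (f g : S[T;T⁻¹]) : (f - g).degree ≤ max f.degree g.degree := by
  simpa [sub_eq_add_neg, degree_neg] using degree_add_le f (-g)

theorem degree_sum_le [Semiring S] {ι : Type*} (s : Finset ι) (f : ι → S[T;T⁻¹])
    {c : WithBot ℤ} (h : ∀ i ∈ s, (f i).degree ≤ c) : (∑ i ∈ s, f i).degree ≤ c :=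
  Finset.sum_induction f (·.degree ≤ c)
    (fun _ _ ha hb => (degree_add_le _ _).trans (max_le ha hb)) (by simp) h

theorem degree_mul_le [Semiring S] (f g : S[T;T⁻¹]) : (f * g).degree ≤ f.degree + g.degree := by
  refine Finset.max_le fun d hd => ?_
  obtain ⟨a, ha, b, hb, rfl⟩ :=
    Finset.mem_add.mp (AddMonoidAlgebra.support_coeff_mul_subset f g hd)
  exact WithBot.coe_add a b ▸ add_le_add (Finset.le_max ha) (Finset.le_max hb)

theorem degree_one_le [Semiring S] : (1 : S[T;T⁻¹]).degree ≤ 0 := by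
  simpa using degree_C_le (1 : S)

end LaurentPolynomial

theorem Fin.sum_eq_dite_of_support {M : Type*} [AddCommMonoid M] {m : ℕ} (t : ℕ)
    (f : Fin m → M) (h : ∀ l : Fin m, (l : ℕ) ≠ t → f l = 0) :
    ∑ l, f l = if ht : t < m then f ⟨t, ht⟩ else 0 := by
  split_ifs with ht
  · exact Fintype.sum_eq_single ⟨t, ht⟩ fun l hl => h l (by simpa [Fin.ext_iff] using hl)
  · exact Finset.sum_eq_zero fun l _ => h l (by omega)

theorem Matrix.one_add_vecMulVec_mul_one_add_vecMulVec {ι α : Type*} [Fintype ι]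
    [DecidableEq ι] [CommRing α] {u w : ι → α} {c : α} (h : 1 + c + c * (w ⬝ᵥ u) = 0) :
    (1 + vecMulVec u w) * (1 + vecMulVec (c • u) w) = 1 := by
  refine Matrix.ext fun i j => ?_
  simp only [mul_add, add_mul, mul_one, one_mul, vecMulVec_mul_vecMulVec, Matrix.add_apply,
    vecMulVec_apply, Pi.smul_apply, smul_eq_mul, dotProduct_smul]
  linear_combination (u i * w j) * h

section Mmat

variable {m : ℕ}

theorem Mmat_le_iff {A : Matrix (Fin m) (Fin m) R} {c : WithBot ℤ} :
    Mmat A ≤ c ↔ ∀ i j, (A i j).degree ≤ c := by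
  simp [Mmat, Mdeg, LaurentPolynomial.degree]

theorem degree_le_Mmat (A : Matrix (Fin m) (Fin m) R) (i j : Fin m) :
    (A i j).degree ≤ Mmat A :=
  Mmat_le_iff.mp le_rfl i j

theorem Mmat_one_le : Mmat (1 : Matrix (Fin m) (Fin m) R) ≤ 0 := by
  refine Mmat_le_iff.mpr fun i j => ?_
  rw [one_apply]
  split_ifs
  · exact degree_one_le
  · simp

theorem Mmat_mul_le (A B : Matrix (Fin m) (Fin m) R) : Mmat (A * B) ≤ Mmat A + Mmat B :=
  Mmat_le_iff.mpr fun i j => degree_sum_le _ _ fun l _ =>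
    (degree_mul_le _ _).trans (add_le_add (degree_le_Mmat A i l) (degree_le_Mmat B l j))

theorem Mmat_list_prod_le {l : List (Matrix (Fin m) (Fin m) R)} {c : ℤ}
    (h : ∀ A ∈ l, Mmat A ≤ c) : Mmat l.prod ≤ (l.length * c : ℤ) := by
  induction l with
  | nil => simpa using Mmat_one_le
  | cons A l ih =>
    rw [List.prod_cons, List.length_cons]
    calc Mmat (A * l.prod) ≤ c + (l.length * c : ℤ) :=
          (Mmat_mul_le _ _).trans
            (add_le_add (h A (by simp)) (ih fun B hB => h B (by simp [hB])))
      _ = ((l.length + 1 : ℕ) * c : ℤ) := by norm_cast; push_cast; ring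

theorem Mmat_zpow_le {U : GL (Fin m) R} {a : ℤ} (h : Mmat U.val ≤ a)
    (hinv : Mmat U⁻¹.val ≤ (-a : ℤ)) (p : ℤ) : Mmat (U ^ p).val ≤ (p * a : ℤ) := by
  have hpow : ∀ (V : GL (Fin m) R) (b : ℤ), Mmat V.val ≤ b → ∀ k : ℕ,
      Mmat (V ^ k).val ≤ (k * b : ℤ) := fun V b hV k => by
    simpa [Units.val_pow_eq_pow_val] using
      Mmat_list_prod_le (l := List.replicate k V.val) (by simpa using fun _ => hV)
  cases p with
  | ofNat k => simpa using hpow U a h k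
  | negSucc k =>
    rw [zpow_negSucc, ← inv_pow]
    refine (hpow U⁻¹ (-a) hinv (k + 1)).trans_eq ?_
    congr 1
    rw [Int.negSucc_eq]
    push_cast
    ring

theorem Mmat_T_smul_map_C_le (k : ℤ) (A : Matrix (Fin m) (Fin m) ℤ) :
    Mmat ((T k : R) • A.map C) ≤ k :=
  Mmat_le_iff.mpr fun i j => by
    simpa [mul_comm] using degree_C_mul_T_le k (A i j)

/-- Evaluating at `q = 1` shows that `A` is invertible over `ℤ`, so `U⁻¹ = q⁻ᵏ A⁻¹`. -/
theorem Mmat_inv_le_of_val_eq_T_smul {U : GL (Fin m) R} {k : ℤ} {A : Matrix (Fin m) (Fin m) ℤ}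
    (hU : U.val = (T k : R) • A.map C) : Mmat U⁻¹.val ≤ (-k : ℤ) := by
  let ε : R →+* ℤ := eval₂ (RingHom.id ℤ) 1
  have hεT : ∀ l, ε (T l) = 1 := fun l => by simp [ε, eval₂_T]
  have hεC : ε.comp C = RingHom.id ℤ := RingHom.ext_int _ _
  have hAB : A * U⁻¹.val.map ε = 1 := by
    have h := congrArg (Matrix.map · ε) U.mul_inv
    rwa [Matrix.map_mul, hU, Matrix.map_smul' _ _ _ (map_mul ε), hεT, one_smul, Matrix.map_map,
      ← RingHom.coe_comp, hεC, RingHom.coe_id, Matrix.map_id,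
      Matrix.map_one _ (map_zero ε) (map_one ε)] at h
  have hinv : U⁻¹.val = (T (-k) : R) • (U⁻¹.val.map ε).map C := by
    refine Units.inv_eq_of_mul_eq_one_left ?_
    rw [hU, smul_mul_smul_comm, ← Matrix.map_mul, mul_eq_one_comm.mp hAB,
      Matrix.map_one _ (map_zero C) (map_one C), ← T_add, neg_add_cancel, T_zero, one_smul]
  rw [hinv]
  exact Mmat_T_smul_map_C_le _ _

end Mmat

section BurauMatrices

variable (m : ℕ)

def burauCol (k : ℕ) : Fin m → R :=
  fun r => (if (r : ℕ) + 1 = k then q else 0) - (if (r : ℕ) = k then 1 else 0)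

def bandRow (i j : ℕ) : Fin m → R := fun c => if i ≤ (c : ℕ) ∧ (c : ℕ) < j then 1 else 0

def burauBand (i j : ℕ) : Matrix (Fin m) (Fin m) R :=
  1 + vecMulVec (burauCol m i - burauCol m j) (bandRow m i j)

def burauBandInv (i j : ℕ) : Matrix (Fin m) (Fin m) R :=
  1 + vecMulVec ((T (-1) : R) • (burauCol m i - burauCol m j)) (bandRow m i j)

/-- The Burau matrix of `σ' (k-1) ⋯ σ' 0`; for `k = m` it is the matrix of `δ`. -/
def burauDeltaPartial (k : ℕ) : Matrix (Fin m) (Fin m) R :=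
  Matrix.of fun r c =>
    if (r : ℕ) + 1 < k then (if (c : ℕ) = (r : ℕ) + 1 then q else 0)
    else if (r : ℕ) + 1 = k then (if (c : ℕ) < k then -q else 0)
    else if (r : ℕ) = k then (if (c : ℕ) ≤ k then 1 else 0)
    else (if (c : ℕ) = (r : ℕ) then 1 else 0)

def deltaCompanion : Matrix (Fin m) (Fin m) ℤ :=
  Matrix.of fun r c => if (r : ℕ) + 1 < m then (if (c : ℕ) = (r : ℕ) + 1 then 1 else 0) else -1

variable {m}

theorem bandRow_dotProduct_burauCol {i j : ℕ} (k : ℕ) (hj : j ≤ m) :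
    bandRow m i j ⬝ᵥ burauCol m k =
      (if i + 1 ≤ k ∧ k ≤ j then q else 0) - (if i ≤ k ∧ k < j then 1 else 0) := by
  simp only [dotProduct, bandRow, burauCol, mul_sub, Finset.sum_sub_distrib, mul_ite, mul_zero]
  rw [Fin.sum_eq_dite_of_support (k - 1) _ fun l hl => if_neg (by omega),
    Fin.sum_eq_dite_of_support k _ fun l hl => if_neg hl]
  split_ifs <;> simp_all <;> omega

theorem bandRow_add {i j : ℕ} (hij : i < j) :
    bandRow m i (i + 1) + bandRow m (i + 1) j = bandRow m i j := by
  ext c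
  simp only [bandRow, Pi.add_apply]
  split_ifs <;> first | omega | simp

theorem burauBand_mul_burauBandInv {i j : ℕ} (hij : i < j) (hj : j ≤ m) :
    burauBand m i j * burauBandInv m i j = 1 := by
  have hTq : (T (-1) : R) * q = 1 := by rw [← T_add, neg_add_cancel, T_zero]
  refine one_add_vecMulVec_mul_one_add_vecMulVec ?_
  rw [dotProduct_sub, bandRow_dotProduct_burauCol i hj, bandRow_dotProduct_burauCol j hj,
    if_neg (by omega), if_pos ⟨le_rfl, hij⟩, if_pos ⟨hij, le_rfl⟩, if_neg (by omega)]
  linear_combination -hTq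

theorem burauBand_mul_burauBand {i j : ℕ} (hij : i + 1 < j) (hj : j ≤ m) :
    burauBand m i (i + 1) * burauBand m i j = burauBand m (i + 1) j * burauBand m i (i + 1) := by
  have hba : bandRow m i (i + 1) ⬝ᵥ (burauCol m i - burauCol m j) = -1 := by
    rw [dotProduct_sub, bandRow_dotProduct_burauCol i (by omega),
      bandRow_dotProduct_burauCol j (by omega)]
    split_ifs <;> first | omega | ring
  have hab : bandRow m (i + 1) j ⬝ᵥ (burauCol m i - burauCol m (i + 1)) = 1 := by
    rw [dotProduct_sub, bandRow_dotProduct_burauCol i hj, bandRow_dotProduct_burauCol (i + 1) hj]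
    split_ifs <;> first | omega | ring
  unfold burauBand
  rw [← bandRow_add (m := m) (by omega : i < j)]
  simp only [mul_add, add_mul, mul_one, one_mul, vecMulVec_mul_vecMulVec, hab, hba]
  refine Matrix.ext fun r c => ?_
  simp only [Matrix.add_apply, vecMulVec_apply, Pi.add_apply, Pi.sub_apply, Pi.smul_apply,
    smul_eq_mul]
  ring

theorem burauGen_eq_burauBand (n : ℕ) (i : Fin (n - 1)) :
    burauGen n i = burauBand (n - 1) i (i + 1) := by
  refine Matrix.ext fun r c => ?_
  simp only [burauGen, burauBand, Matrix.add_apply, vecMulVec_apply, Pi.sub_apply, burauCol,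
    bandRow, one_apply, Fin.ext_iff]
  split_ifs <;> first | omega | ring

theorem degree_burauCol_le (k : ℕ) (r : Fin m) : (burauCol m k r).degree ≤ 1 := by
  refine (degree_sub_le _ _).trans (max_le ?_ ?_) <;> split_ifs
  · exact degree_T_le 1
  all_goals simp [degree_one_le.trans zero_le_one]

theorem degree_bandRow_le (i j : ℕ) (c : Fin m) : (bandRow m i j c).degree ≤ 0 := by
  unfold bandRow
  split_ifs <;> simp [degree_one_le]

theorem Mmat_burauBandInv_le (i j : ℕ) : Mmat (burauBandInv m i j) ≤ 0 := by
  refine Mmat_le_iff.mpr fun r c => ?_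
  rw [burauBandInv, Matrix.add_apply, vecMulVec_apply, Pi.smul_apply, smul_eq_mul]
  refine (degree_add_le _ _).trans (max_le (Mmat_le_iff.mp Mmat_one_le r c) ?_)
  have hcol : ((burauCol m i - burauCol m j) r).degree ≤ 1 :=
    (degree_sub_le _ _).trans (max_le (degree_burauCol_le _ _) (degree_burauCol_le _ _))
  have hscaled : (T (-1) * (burauCol m i - burauCol m j) r).degree ≤ 0 :=
    calc _ ≤ (T (-1) : R).degree + ((burauCol m i - burauCol m j) r).degree := degree_mul_le _ _
      _ ≤ ((-1 : ℤ) : WithBot ℤ) + 1 := add_le_add (degree_T_le _) hcol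
      _ = 0 := rfl
  simpa using (degree_mul_le _ _).trans (add_le_add hscaled (degree_bandRow_le i j c))

theorem burauDeltaPartial_zero : burauDeltaPartial m 0 = 1 := by
  refine Matrix.ext fun r c => ?_
  simp only [burauDeltaPartial, of_apply, one_apply, Fin.ext_iff]
  split_ifs <;> first | omega | rfl | simp_all

theorem burauBand_mul_burauDeltaPartial {k : ℕ} (hk : k < m) :
    burauBand m k (k + 1) * burauDeltaPartial m k = burauDeltaPartial m (k + 1) := by
  have hrow : bandRow m k (k + 1) ᵥ* burauDeltaPartial m k =
      fun c : Fin m => if (c : ℕ) ≤ k then (1 : R) else 0 := by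
    ext1 c
    rw [vecMul, dotProduct, Fin.sum_eq_dite_of_support k _ fun l hl => by
      rw [bandRow, if_neg (by omega), zero_mul], dif_pos hk, bandRow, if_pos (by simp), one_mul]
    simp [burauDeltaPartial]
  rw [burauBand, add_mul, one_mul, vecMulVec_mul, hrow]
  refine Matrix.ext fun r c => ?_
  simp only [burauDeltaPartial, Matrix.add_apply, vecMulVec_apply, of_apply, Pi.sub_apply,
    burauCol]
  split_ifs <;> first | omega | ring

theorem burauDeltaPartial_self :
    burauDeltaPartial m m = (T 1 : R) • (deltaCompanion m).map C := by
  refine Matrix.ext fun r c => ?_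
  simp only [burauDeltaPartial, deltaCompanion, of_apply, Matrix.smul_apply, Matrix.map_apply,
    smul_eq_mul]
  split_ifs <;> first | omega | simp

end BurauMatrices

section BraidGroup

variable {n : ℕ}

theorem band_succ_self (i : ℕ) : band (n := n) i (i + 1) = σ' i := by
  simp [band]

theorem band_eq_conj {i j : ℕ} (h : i + 1 < j) :
    band (n := n) i j = (σ' i)⁻¹ * band (i + 1) j * σ' i := by
  obtain ⟨k, rfl⟩ : ∃ k, j = i + k + 2 := ⟨j - i - 2, by omega⟩
  have hshift : ((fun t => σ' (n := n) (i + t)) ∘ Nat.succ) = fun t => σ' (i + 1 + t) :=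
    funext fun t => congrArg σ' (by omega)
  simp only [band, show i + k + 2 - 1 - i = k + 1 by omega,
    show i + k + 2 - 1 - (i + 1) = k by omega, List.range_succ_eq_map, List.map_cons,
    List.map_map, List.reverse_cons, List.prod_append, List.prod_singleton, add_zero, hshift]
  group

theorem dualDelta_partial_succ (k : ℕ) :
    (((List.range (k + 1)).map (σ' (n := n))).reverse.prod : BraidGroup n) =
      σ' k * ((List.range k).map (σ' (n := n))).reverse.prod := by
  simp [List.range_succ]

end BraidGroup

section Burau

variable {n : ℕ} (ρ : BraidGroup n →* GL (Fin (n - 1)) R)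
  (hρ : ∀ i : Fin (n - 1), (ρ (σ i) : Matrix (Fin (n - 1)) (Fin (n - 1)) R) = burauGen n i)
include hρ

theorem burau_σ' {i : ℕ} (hi : i < n - 1) : (ρ (σ' i)).val = burauBand (n - 1) i (i + 1) := by
  rw [σ', dif_pos hi, hρ, burauGen_eq_burauBand]

theorem burau_band {i j : ℕ} (hij : i < j) (hj : j < n) :
    (ρ (band i j)).val = burauBand (n - 1) i j := by
  induction hk : j - 1 - i generalizing i with
  | zero =>
    obtain rfl : j = i + 1 := by omega
    rw [band_succ_self, burau_σ' ρ hρ (by omega)]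
  | succ k ih =>
    have hconj : σ' i * band i j = band (i + 1) j * σ' (n := n) i := by
      rw [band_eq_conj (by omega)]
      group
    have hval := congrArg (fun g => (ρ g).val) hconj
    simp only [map_mul, Units.val_mul, ih (i := i + 1) (by omega) (by omega)] at hval
    refine (Units.mul_right_inj (ρ (σ' i))).mp ?_
    rw [hval, burau_σ' ρ hρ (by omega), burauBand_mul_burauBand (by omega) (by omega)]

theorem burau_dualDelta : (ρ (dualDelta n)).val = burauDeltaPartial (n - 1) (n - 1) := by
  suffices h : ∀ k ≤ n - 1,
      (ρ ((List.range k).map (σ' (n := n))).reverse.prod).val = burauDeltaPartial (n - 1) k from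
    h (n - 1) le_rfl
  intro k hk
  induction k with
  | zero => simp [burauDeltaPartial_zero]
  | succ k ih =>
    rw [dualDelta_partial_succ, map_mul, Units.val_mul, ih (by omega), burau_σ' ρ hρ (by omega),
      burauBand_mul_burauDeltaPartial (by omega)]

theorem Mmat_burau_inv_le_of_dualPositive {x : BraidGroup n} (hx : DualPositive x) :
    Mmat (ρ x)⁻¹.val ≤ 0 := by
  induction hx using Submonoid.closure_induction with
  | mem y hy =>
    obtain ⟨i, j, hij, hj, rfl⟩ := hy
    rw [Units.inv_eq_of_mul_eq_one_left (a := burauBandInv (n - 1) i j)]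
    · exact Mmat_burauBandInv_le i j
    · rw [burau_band ρ hρ hij hj, mul_eq_one_comm]
      exact burauBand_mul_burauBandInv hij (by omega)
  | one => simpa using Mmat_one_le
  | mul a b _ _ ha hb =>
    rw [map_mul, _root_.mul_inv_rev, Units.val_mul]
    simpa using (Mmat_mul_le _ _).trans (add_le_add hb ha)

theorem Mmat_burau_dualDelta_le : Mmat (ρ (dualDelta n)).val ≤ (1 : ℤ) := by
  rw [burau_dualDelta ρ hρ, burauDeltaPartial_self]
  exact Mmat_T_smul_map_C_le 1 _

theorem Mmat_burau_dualDelta_zpow_le (p : ℤ) : Mmat (ρ (dualDelta n ^ p)).val ≤ p := by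
  have hinv : Mmat (ρ (dualDelta n))⁻¹.val ≤ (-1 : ℤ) := by
    refine Mmat_inv_le_of_val_eq_T_smul (A := deltaCompanion (n - 1)) ?_
    rw [burau_dualDelta ρ hρ, burauDeltaPartial_self]
  simpa using Mmat_zpow_le (Mmat_burau_dualDelta_le ρ hρ) hinv p

theorem Mmat_burau_le_one_of_dualSimple {d : BraidGroup n} (hd : DualSimple d) :
    Mmat (ρ d).val ≤ (1 : ℤ) := by
  have hsplit : ρ d = ρ (dualDelta n) * (ρ (d⁻¹ * dualDelta n))⁻¹ := by
    rw [← map_inv, ← map_mul]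
    group
  rw [hsplit, Units.val_mul]
  simpa using (Mmat_mul_le _ _).trans
    (add_le_add (Mmat_burau_dualDelta_le ρ hρ) (Mmat_burau_inv_le_of_dualPositive ρ hρ hd.2))

end Burau

/-- For any braid x ∈ Bₙ, the maximal q-degree among the entries of the reduced Burau
  matrix of x is at most the dual supremum of x: M(ρₙ(x)) ≤ p + r for every
  decomposition x = δᵖd₁⋯d_r into dual simple elements (hence ≤ sup_d(x), the minimum
  of p + r over such decompositions). -/
theorem burau_degree_le_dual_sup (n : ℕ)
    (ρ : BraidGroup n →* GL (Fin (n - 1)) R)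
    (hρ : ∀ i : Fin (n - 1), (ρ (σ i) : Matrix (Fin (n - 1)) (Fin (n - 1)) R) = burauGen n i)
    (x : BraidGroup n) (p : ℤ) (r : ℕ) (d : ℕ → BraidGroup n)
    (hd : ∀ i < r, DualSimple (d i))
    (hx : x = (dualDelta n) ^ p * ((List.range r).map d).prod) :
    Mmat (ρ x : Matrix (Fin (n - 1)) (Fin (n - 1)) R) ≤ ((p + (r : ℤ)) : WithBot ℤ) := by
  have hsimples : Mmat (ρ ((List.range r).map d).prod).val ≤ (r : ℤ) := by
    rw [← Units.coeHom_apply, ← MonoidHom.comp_apply, map_list_prod, List.map_map]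
    refine (Mmat_list_prod_le (c := 1) ?_).trans_eq (by simp)
    simp only [List.mem_map, List.mem_range]
    rintro _ ⟨i, hi, rfl⟩
    exact Mmat_burau_le_one_of_dualSimple ρ hρ (hd i hi)
  subst hx
  rw [map_mul, Units.val_mul]
  calc _ ≤ Mmat (ρ (dualDelta n ^ p)).val + Mmat (ρ ((List.range r).map d).prod).val :=
        Mmat_mul_le _ _
    _ ≤ p + (r : ℤ) := add_le_add (Mmat_burau_dualDelta_zpow_le ρ hρ p) hsimples
    _ = (p + r : ℤ) := rfl
end
end
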